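/- Let p ∈ ℂ be nonzero and Δ, α ∈ ℂ. The free rank-one ℂ[∂]-module M = ℂ[∂]v with λ-actions L_0 λ v = p(∂ + Δλ + α)v and L_i λ v = 0 for i ≥ 1 is a conformal module over B(p): the module axioms (∂a) λ v = -λ(a λ v), a λ (∂v) = (∂+λ)(a λ v), and [a λ b]_{λ+μ} v = a λ (b μ v) - b μ (a λ v) all hold. -/
import Mathlib


open MvPolynomial

/-- Elements of `B(p)`: coefficients in `ℂ[∂]` on the basis `{L_i}`. -/
abbrev BlockAlg := ℕ →₀ Polynomial ℂ

/-- `ℂ[∂,λ,μ]`, with `∂ = X 0`, `λ = X 1`, `μ = X 2`.  Elements of the rank-one module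
`M = ℂ[∂]v` and of `ℂ[λ]⊗M`, `ℂ[λ,μ]⊗M` are written as `P·v` with `P` in this ring. -/
abbrev P3 := MvPolynomial (Fin 3) ℂ

/-- The λ-action of `a = Σ f_i(∂) L_i ∈ B(p)` with spectral parameter `s` on a module
element `w·v` of `M_{Δ,α}`: since `L_0 λ v = p(∂+Δλ+α)v` and `L_i λ v = 0` for `i ≥ 1`,
one gets `f_0(-s)·w(∂+s,·,·)·p(∂+Δs+α)·v`. -/
noncomputable def act (p Δ α : ℂ) (a : BlockAlg) (w s : P3) : P3 :=
  (Polynomial.aeval (-s) (a 0)) * (aeval ![X 0 + s, X 1, X 2] w) *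
    (C p * (X 0 + C Δ * s + C α))

/-- The λ-bracket `[a λ b]` for general `a, b ∈ B(p)`, as a family of polynomials in
`(∂, λ)` indexed by the basis: `[f(∂)L_i λ g(∂)L_j] = f(-λ)g(∂+λ)[L_i λ L_j]`. -/
noncomputable def BR (p : ℂ) (a b : BlockAlg) : ℕ →₀ P3 :=
  a.sum fun i f => b.sum fun j g =>
    Finsupp.single (i + j)
      ((Polynomial.aeval (-(X 1) : P3) f) * (Polynomial.aeval ((X 0 : P3) + X 1) g) *
        (C ((i : ℂ) + p) * X 0 + C ((i : ℂ) + (j : ℂ) + 2 * p) * X 1))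

/-- The action of an element of `ℂ[∂,λ]⊗B(p)` (such as `[a λ b]`) with spectral
parameter `s` on `w·v`: the coefficient of `L_0` gets `∂ ↦ -s`, and only `L_0` acts. -/
noncomputable def actC (p Δ α : ℂ) (c : ℕ →₀ P3) (w s : P3) : P3 :=
  (aeval ![-s, X 1, X 2] (c 0)) * (aeval ![X 0 + s, X 1, X 2] w) *
    (C p * (X 0 + C Δ * s + C α))

/-- Multiplication by `∂` on `B(p)`. -/
noncomputable def dMul (a : BlockAlg) : BlockAlg :=
  Finsupp.mapRange (Polynomial.X * ·) (by simp) a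

lemma BR_zero (p : ℂ) (a b : BlockAlg) :
    (BR p a b) 0 = (Polynomial.aeval (-(X 1) : P3) (a 0)) *
      (Polynomial.aeval ((X 0 : P3) + X 1) (b 0)) * (C p * X 0 + C (2 * p) * X 1) := by
  classical
  simp only [BR, Finsupp.sum, Finset.sum_apply', Finsupp.single_apply, Nat.add_eq_zero,
    ite_and]
  have step : ∀ x ∈ a.support,
      (∑ y ∈ b.support, if x = 0 then
          (if y = 0 then
            (Polynomial.aeval (-(X 1) : P3)) (a x) * (Polynomial.aeval ((X 0 : P3) + X 1)) (b y) *
              (C ((x : ℂ) + p) * X 0 + C ((x : ℂ) + (y : ℂ) + 2 * p) * X 1)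
          else 0) else 0)
      = if x = 0 then
          (Polynomial.aeval (-(X 1) : P3)) (a x) * (Polynomial.aeval ((X 0 : P3) + X 1)) (b 0) *
              (C ((x : ℂ) + p) * X 0 + C ((x : ℂ) + (0 : ℂ) + 2 * p) * X 1)
        else 0 := by
    intro x _
    split
    · rw [Finset.sum_ite_eq' b.support 0]
      by_cases hb : 0 ∈ b.support
      · simp [hb]
      · simp only [Finsupp.notMem_support_iff] at hb
        simp [hb]
    · simp
  rw [Finset.sum_congr rfl step, Finset.sum_ite_eq' a.support 0]
  by_cases ha : 0 ∈ a.support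
  · simp [ha]
  · simp only [Finsupp.notMem_support_iff] at ha
    simp [ha]
/-- The free rank-one `ℂ[∂]`-module `M_{Δ,α} = ℂ[∂]v` with `L_0 λ v = p(∂+Δλ+α)v`,
`L_i λ v = 0` for `i ≥ 1`, is a conformal module over `B(p)`:
`(∂a) λ v = -λ(a λ v)`, `a λ (∂v) = (∂+λ)(a λ v)`, and
`[a λ b]_{λ+μ} v = a λ (b μ v) - b μ (a λ v)`. -/
theorem M_Delta_alpha_is_conformal_module (p : ℂ) (hp : p ≠ 0) (Δ α : ℂ) :
    (∀ (a : BlockAlg) (g : Polynomial ℂ),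
      act p Δ α (dMul a) (Polynomial.aeval (X 0 : P3) g) (X 1)
        = -(X 1) * act p Δ α a (Polynomial.aeval (X 0 : P3) g) (X 1)) ∧
    (∀ (a : BlockAlg) (g : Polynomial ℂ),
      act p Δ α a (Polynomial.aeval (X 0 : P3) (Polynomial.X * g)) (X 1)
        = (X 0 + X 1) * act p Δ α a (Polynomial.aeval (X 0 : P3) g) (X 1)) ∧
    (∀ (a b : BlockAlg) (g : Polynomial ℂ),
      actC p Δ α (BR p a b) (Polynomial.aeval (X 0 : P3) g) (X 1 + X 2)
        = act p Δ α a (act p Δ α b (Polynomial.aeval (X 0 : P3) g) (X 2)) (X 1)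
          - act p Δ α b (act p Δ α a (Polynomial.aeval (X 0 : P3) g) (X 1)) (X 2)) := by
  refine ⟨fun a g => ?_, fun a g => ?_, fun a b g => ?_⟩
  · simp only [act, dMul, Finsupp.mapRange_apply, map_mul, Polynomial.aeval_X]
    ring
  · simp only [act, map_mul, ← Polynomial.aeval_algHom_apply, Polynomial.aeval_X,
      aeval_X, Matrix.cons_val_zero]
    ring
  · simp only [act, actC, BR_zero, map_mul, map_add, map_neg, ← Polynomial.aeval_algHom_apply,
      aeval_X, aeval_C, Matrix.cons_val_zero, Matrix.cons_val_one, Matrix.head_cons,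
      Matrix.cons_val_two, Matrix.tail_cons, algHom_C, map_ofNat, MvPolynomial.algebraMap_eq]
    ring
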